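/- arXiv:1502.05446 — 5 statements merged into one kernel-verified Lean document; each statement's English description precedes it below -/
import Mathlib

section
/- Let p be a real polynomial with consecutive real roots α_{i_0} < α_{i_0+1}, where α_{i_0} has multiplicity m_{i_0}. Then there exist δ, δ' ∈ (α_{i_0}, α_{i_0+1}) such that p^{(m_{i_0})}(α_{i_0})·p'(x) > 0 for all x ∈ (α_{i_0}, δ] and p^{(m_{i_0})}(α_{i_0})·p'(x) < 0 for all x ∈ [δ', α_{i_0+1}). -/
open Set Polynomial Filter Topology

/-! Write `p = (X - a) ^ m * q` with `q a ≠ 0`, so that `c := p^(m)(a) = m! * q a`. Then `c * p` is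
positive just right of `a`, and, having no zeros on `(a, b)`, on all of `(a, b)`. Since `p'` has
finitely many zeros, `c * p'` has constant sign on small intervals `(a, u)` and `(l, b)`; the mean
value theorem on `[a, x]` and on `[x, b]` gives a point of each where `c * p'` has the sign of
`c * p(x) / (x - a) > 0`, resp. of `-c * p(x) / (b - x) < 0`. -/

theorem IsPreconnected.lt_of_lt_of_forall_ne {X α : Type*} [TopologicalSpace X] [LinearOrder α]
    [TopologicalSpace α] [OrderClosedTopology α] {s : Set X} (hs : IsPreconnected s)
    {f : X → α} (hf : ContinuousOn f s) {c : α} (hne : ∀ z ∈ s, f z ≠ c) {x y : X}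
    (hx : x ∈ s) (hy : y ∈ s) (hcx : c < f x) : c < f y := by
  by_contra! hyc
  obtain ⟨z, hz, hzc⟩ := hs.intermediate_value hy hx hf ⟨hyc, hcx.le⟩
  exact hne z hz hzc

theorem exists_mem_Ioo_forall_Ioc_of_eventually_nhdsGT {a b : ℝ} (hab : a < b) {P : ℝ → Prop}
    (h : ∀ᶠ x in 𝓝[>] a, P x) : ∃ δ ∈ Ioo a b, ∀ x ∈ Ioc a δ, P x := by
  obtain ⟨u, hau, hu⟩ := mem_nhdsGT_iff_exists_Ioc_subset.1 (h.and (Ioo_mem_nhdsGT hab))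
  exact ⟨u, ⟨hau, (hu ⟨hau, le_rfl⟩).2.2⟩, fun x hx ↦ (hu hx).1⟩

theorem exists_mem_Ioo_forall_Ico_of_eventually_nhdsLT {a b : ℝ} (hab : a < b) {P : ℝ → Prop}
    (h : ∀ᶠ x in 𝓝[<] b, P x) : ∃ δ ∈ Ioo a b, ∀ x ∈ Ico δ b, P x := by
  obtain ⟨l, hlb, hl⟩ := mem_nhdsLT_iff_exists_Ico_subset.1 (h.and (Ioo_mem_nhdsLT hab))
  exact ⟨l, ⟨(hl ⟨le_rfl, hlb⟩).2.1, hlb⟩, fun x hx ↦ (hl hx).1⟩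

section SignOfDerivative

variable {f f' : ℝ → ℝ} {a b : ℝ}

theorem eventually_nhdsGT_deriv_pos (hab : a < b) (hf : ∀ x, HasDerivAt f (f' x) x)
    (hf' : Continuous f') (ha : f a = 0) (hpos : ∀ x ∈ Ioo a b, 0 < f x)
    (hne : ∀ᶠ x in 𝓝[>] a, f' x ≠ 0) : ∀ᶠ x in 𝓝[>] a, 0 < f' x := by
  obtain ⟨u, hau, hu⟩ := mem_nhdsGT_iff_exists_Ioo_subset.1 (hne.and (Ioo_mem_nhdsGT hab))
  have hmid : (a + u) / 2 ∈ Ioo a u := ⟨by linarith [mem_Ioi.1 hau], by linarith [mem_Ioi.1 hau]⟩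
  obtain ⟨ξ, hξ, hξslope⟩ := exists_hasDerivAt_eq_slope f f' hmid.1
    (Differentiable.continuous fun x ↦ (hf x).differentiableAt).continuousOn (fun x _ ↦ hf x)
  have hξpos : 0 < f' ξ := by
    rw [hξslope, ha, sub_zero]
    exact div_pos (hpos _ ⟨hmid.1, (hu hmid).2.2⟩) (sub_pos.2 hmid.1)
  filter_upwards [Ioo_mem_nhdsGT (mem_Ioi.1 hau)] with x hx
  exact isPreconnected_Ioo.lt_of_lt_of_forall_ne hf'.continuousOn (fun z hz ↦ (hu hz).1)
    ⟨hξ.1, hξ.2.trans hmid.2⟩ hx hξpos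

theorem eventually_nhdsLT_deriv_neg (hab : a < b) (hf : ∀ x, HasDerivAt f (f' x) x)
    (hf' : Continuous f') (hb : f b = 0) (hpos : ∀ x ∈ Ioo a b, 0 < f x)
    (hne : ∀ᶠ x in 𝓝[<] b, f' x ≠ 0) : ∀ᶠ x in 𝓝[<] b, f' x < 0 := by
  obtain ⟨l, hlb, hl⟩ := mem_nhdsLT_iff_exists_Ioo_subset.1 (hne.and (Ioo_mem_nhdsLT hab))
  have hmid : (l + b) / 2 ∈ Ioo l b := ⟨by linarith [mem_Iio.1 hlb], by linarith [mem_Iio.1 hlb]⟩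
  obtain ⟨ξ, hξ, hξslope⟩ := exists_hasDerivAt_eq_slope f f' hmid.2
    (Differentiable.continuous fun x ↦ (hf x).differentiableAt).continuousOn (fun x _ ↦ hf x)
  have hξneg : 0 < -f' ξ := by
    rw [hξslope, hb, zero_sub, ← neg_div, neg_neg]
    exact div_pos (hpos _ ⟨(hl hmid).2.1, hmid.2⟩) (sub_pos.2 hmid.2)
  filter_upwards [Ioo_mem_nhdsLT (mem_Iio.1 hlb)] with x hx
  exact neg_pos.1 <| isPreconnected_Ioo.lt_of_lt_of_forall_ne hf'.continuousOn.neg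
    (fun z hz ↦ neg_ne_zero.2 (hl hz).1) ⟨hmid.1.trans hξ.1, hξ.2⟩ hx hξneg

end SignOfDerivative

namespace Polynomial

theorem derivative_ne_zero_of_isRoot {p : ℝ[X]} (hp : p ≠ 0) {a : ℝ} (ha : p.IsRoot a) :
    derivative p ≠ 0 := by
  intro h
  rw [eq_C_of_natDegree_eq_zero (derivative_eq_zero.1 h)] at ha hp
  exact hp (by simpa using ha)

theorem eventually_nhdsNE_eval_ne_zero {p : ℝ[X]} (hp : p ≠ 0) (a : ℝ) :
    ∀ᶠ x in 𝓝[≠] a, p.eval x ≠ 0 :=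
  nhdsNE_le_cofinite a (finite_setOfPred_isRoot hp).eventually_cofinite_notMem

theorem eventually_nhdsGT_pos_eval_iterate_derivative_rootMultiplicity_mul {p : ℝ[X]} (hp : p ≠ 0)
    (a : ℝ) : ∀ᶠ x in 𝓝[>] a,
      0 < (derivative^[p.rootMultiplicity a] p).eval a * p.eval x := by
  set m := p.rootMultiplicity a
  set q := p /ₘ (X - C a) ^ m
  have hqa : q.eval a ≠ 0 := eval_divByMonic_pow_rootMultiplicity_ne_zero a hp
  have hq : ∀ᶠ x in 𝓝 a, 0 < q.eval a * q.eval x :=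
    (isOpen_lt continuous_const (continuous_const.mul q.continuous)).mem_nhds
      (mul_self_pos.2 hqa)
  filter_upwards [nhdsWithin_le_nhds hq, self_mem_nhdsWithin] with x hqx hx
  have hpx : p.eval x = (x - a) ^ m * q.eval x := by
    conv_lhs => rw [← p.pow_mul_divByMonic_rootMultiplicity_eq a]
    simp only [eval_mul, eval_pow, eval_sub, eval_X, eval_C, q, m]
  have hc : (derivative^[m] p).eval a = m.factorial * q.eval a := by
    rw [eval_iterate_derivative_rootMultiplicity, nsmul_eq_mul]
  have hxa : 0 < (x - a) ^ m := pow_pos (sub_pos.2 hx) m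
  calc (0 : ℝ) < m.factorial * (x - a) ^ m * (q.eval a * q.eval x) := by positivity
    _ = _ := by rw [hc, hpx]; ring

end Polynomial

theorem stmt_2 (p : Polynomial ℝ) (hp : p ≠ 0) (a b : ℝ) (hab : a < b)
    (ha : p.IsRoot a) (hb : p.IsRoot b)
    (hmid : ∀ x ∈ Set.Ioo a b, ¬ p.IsRoot x) :
    ∃ δ ∈ Set.Ioo a b, ∃ δ' ∈ Set.Ioo a b,
      (∀ x ∈ Set.Ioc a δ,
        0 < Polynomial.eval a ((⇑Polynomial.derivative)^[p.rootMultiplicity a] p) *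
            Polynomial.eval x (Polynomial.derivative p)) ∧
      (∀ x ∈ Set.Ico δ' b,
        Polynomial.eval a ((⇑Polynomial.derivative)^[p.rootMultiplicity a] p) *
            Polynomial.eval x (Polynomial.derivative p) < 0) := by
  set c := (derivative^[p.rootMultiplicity a] p).eval a
  have hnear := eventually_nhdsGT_pos_eval_iterate_derivative_rootMultiplicity_mul hp a
  obtain ⟨x₀, hx₀pos, hx₀⟩ := (hnear.and (Ioo_mem_nhdsGT hab)).exists
  have hc : c ≠ 0 := left_ne_zero_of_mul hx₀pos.ne'
  have hpos : ∀ x ∈ Ioo a b, 0 < c * p.eval x := fun x hx ↦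
    isPreconnected_Ioo.lt_of_lt_of_forall_ne (by fun_prop)
      (fun z hz ↦ mul_ne_zero hc (hmid z hz)) hx₀ hx hx₀pos
  have hderiv : ∀ x, HasDerivAt (fun x ↦ c * p.eval x) (c * (derivative p).eval x) x :=
    fun x ↦ (p.hasDerivAt x).const_mul c
  have hne : ∀ y, ∀ᶠ x in 𝓝[≠] y, c * (derivative p).eval x ≠ 0 := fun y ↦
    (eventually_nhdsNE_eval_ne_zero (derivative_ne_zero_of_isRoot hp ha) y).mono
      fun _ ↦ mul_ne_zero hc
  obtain ⟨δ, hδ, hright⟩ := exists_mem_Ioo_forall_Ioc_of_eventually_nhdsGT hab <|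
    eventually_nhdsGT_deriv_pos hab hderiv (by fun_prop) (by rw [ha.eq_zero, mul_zero]) hpos
      (nhdsGT_le_nhdsNE a (hne a))
  obtain ⟨δ', hδ', hleft⟩ := exists_mem_Ioo_forall_Ico_of_eventually_nhdsLT hab <|
    eventually_nhdsLT_deriv_neg hab hderiv (by fun_prop) (by rw [hb.eq_zero, mul_zero]) hpos
      (nhdsLT_le_nhdsNE b (hne b))
  exact ⟨δ, hδ, δ', hδ', hright, hleft⟩
end

section
/- Let B be the 3×3 real matrix with rows (0, 1/b₁, 0), (0, 0, 1/c₂), (1/a₃, −(a₁/(b₁a₃))s, −a₂/(a₃c₂)), where a₃b₁c₂ ≠ 0, and let λ = 1/|c₂| > 1. Suppose |a₁ s| ≥ (λ|a₃b₁c₂| + |b₁c₂| + |a₂b₁|)/|c₂|. Then for every vector v = (v₀, u₀₁, u₀₂) ∈ ℝ³ with max(|u₀₁|,|u₀₂|) > |v₀|, one has max(|(Bv)₂|, |(Bv)₃|) ≥ λ·max(|u₀₁|,|u₀₂|). -/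
/-!
If `|u₀₁| ≤ |u₀₂|`, the second coordinate `u₀₂ / c₂` alone is expanded by `1 / |c₂|`.
Otherwise `u₀₁` dominates both other entries, and after clearing the denominator `a₃ b₁ c₂`
the third coordinate is `b₁c₂ v₀ - c₂a₁s u₀₁ - a₂b₁ u₀₂`; the reverse triangle inequality
bounds it below by `(|c₂a₁s| - |b₁c₂| - |a₂b₁|) |u₀₁|`, and the hypothesis on `|a₁ s|` says
exactly that this coefficient is at least `|a₃b₁c₂| / |c₂|`.
-/

theorem sub_abs_sub_abs_mul_le_abs {α : Type*} [CommRing α] [LinearOrder α]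
    [IsStrictOrderedRing α] (p q r x y z : α) (hy : |y| ≤ |x|) (hz : |z| ≤ |x|) :
    (|p| - |q| - |r|) * |x| ≤ |q * y - p * x - r * z| := by
  have hyx : |q| * |y| ≤ |q| * |x| := mul_le_mul_of_nonneg_left hy (abs_nonneg q)
  have hzx : |r| * |z| ≤ |r| * |x| := mul_le_mul_of_nonneg_left hz (abs_nonneg r)
  have htri : |p * x| ≤ |q * y - p * x - r * z| + |q * y| + |r * z| := by
    calc |p * x| = |-(q * y - p * x - r * z) + q * y + -(r * z)| := by ring_nf
      _ ≤ |-(q * y - p * x - r * z)| + |q * y| + |-(r * z)| := abs_add_three _ _ _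
      _ = |q * y - p * x - r * z| + |q * y| + |r * z| := by rw [abs_neg, abs_neg]
  rw [abs_mul, abs_mul, abs_mul] at htri
  linarith

theorem stmt_8_general (a₁ a₂ a₃ b₁ c₂ s : ℝ) (h : a₃ * b₁ * c₂ ≠ 0)
    (hs : ((1 / |c₂|) * |a₃ * b₁ * c₂| + |b₁ * c₂| + |a₂ * b₁|) / |c₂| ≤ |a₁ * s|)
    (v₀ u₀₁ u₀₂ : ℝ) (hv : |v₀| < max |u₀₁| |u₀₂|) :
    (1 / |c₂|) * max |u₀₁| |u₀₂| ≤
      max |u₀₂ / c₂|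
        |v₀ / a₃ - (a₁ / (b₁ * a₃)) * s * u₀₁ - (a₂ / (a₃ * c₂)) * u₀₂| := by
  have ha₃ : a₃ ≠ 0 := left_ne_zero_of_mul (left_ne_zero_of_mul h)
  have hb₁ : b₁ ≠ 0 := right_ne_zero_of_mul (left_ne_zero_of_mul h)
  have hc₂ : c₂ ≠ 0 := right_ne_zero_of_mul h
  rcases le_total |u₀₁| |u₀₂| with h21 | h12
  · rw [max_eq_right h21, abs_div, one_div_mul_eq_div]
    exact le_max_left _ _
  rw [max_eq_left h12] at hv ⊢
  refine le_max_of_le_right ?_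
  set w := v₀ / a₃ - (a₁ / (b₁ * a₃)) * s * u₀₁ - (a₂ / (a₃ * c₂)) * u₀₂
  have hw : a₃ * b₁ * c₂ * w = b₁ * c₂ * v₀ - c₂ * (a₁ * s) * u₀₁ - a₂ * b₁ * u₀₂ := by
    simp only [w]; field_simp
  have hcoef : 1 / |c₂| * |a₃ * b₁ * c₂| ≤ |c₂ * (a₁ * s)| - |b₁ * c₂| - |a₂ * b₁| := by
    rw [div_le_iff₀ (abs_pos.mpr hc₂)] at hs
    rw [abs_mul c₂]
    linarith
  have hD : 0 < |a₃ * b₁ * c₂| := abs_pos.mpr h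
  rw [← mul_le_mul_iff_of_pos_left hD]
  calc |a₃ * b₁ * c₂| * (1 / |c₂| * |u₀₁|) = 1 / |c₂| * |a₃ * b₁ * c₂| * |u₀₁| := by ring
    _ ≤ (|c₂ * (a₁ * s)| - |b₁ * c₂| - |a₂ * b₁|) * |u₀₁| :=
        mul_le_mul_of_nonneg_right hcoef (abs_nonneg _)
    _ ≤ |b₁ * c₂ * v₀ - c₂ * (a₁ * s) * u₀₁ - a₂ * b₁ * u₀₂| :=
        sub_abs_sub_abs_mul_le_abs _ _ _ _ _ _ hv.le h12
    _ = |a₃ * b₁ * c₂| * |w| := by rw [← hw, abs_mul]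

theorem stmt_8 (a₁ a₂ a₃ b₁ c₂ s : ℝ) (h : a₃ * b₁ * c₂ ≠ 0) (hc : |c₂| < 1)
    (hs : ((1 / |c₂|) * |a₃ * b₁ * c₂| + |b₁ * c₂| + |a₂ * b₁|) / |c₂| ≤ |a₁ * s|)
    (v₀ u₀₁ u₀₂ : ℝ) (hv : |v₀| < max |u₀₁| |u₀₂|) :
    (1 / |c₂|) * max |u₀₁| |u₀₂| ≤
      max |u₀₂ / c₂|
        |v₀ / a₃ - (a₁ / (b₁ * a₃)) * s * u₀₁ - (a₂ / (a₃ * c₂)) * u₀₂| :=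
  stmt_8_general a₁ a₂ a₃ b₁ c₂ s h hs v₀ u₀₁ u₀₂ hv
end

section
/- Let A be the 3×3 real matrix with rows (a₁p'(x), a₂, 0), (b₁, b₂q'(y), b₃), (1, 0, 0). Suppose λ > 1, |a₁p'(x)| ≥ λ + |a₂|, and |b₂q'(y)| ≥ λ + |b₁| + |b₃|. Then for every vector v = (v₀₁, v₀₂, u₀) ∈ ℝ³ with |u₀| ≤ max(|v₀₁|, |v₀₂|), one has max(|(Av)₁|, |(Av)₂|) ≥ λ·max(|v₀₁|, |v₀₂|). -/
theorem stmt_9 (a₁ a₂ b₁ b₂ b₃ P Q l : ℝ) (hl : 1 < l)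
    (hP : l + |a₂| ≤ |a₁ * P|)
    (hQ : l + |b₁| + |b₃| ≤ |b₂ * Q|)
    (v₀₁ v₀₂ u₀ : ℝ) (hv : |u₀| ≤ max |v₀₁| |v₀₂|) :
    l * max |v₀₁| |v₀₂| ≤
      max |a₁ * P * v₀₁ + a₂ * v₀₂| |b₁ * v₀₁ + b₂ * Q * v₀₂ + b₃ * u₀| := by
  rcases le_total |v₀₂| |v₀₁| with h | h
  · rw [max_eq_left h]
    refine le_trans ?_ (le_max_left _ _)
    have h1 : |a₁ * P * v₀₁| - |a₂ * v₀₂| ≤ |a₁ * P * v₀₁ + a₂ * v₀₂| := by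
      have t1 := abs_add_le (a₁ * P * v₀₁ + a₂ * v₀₂) (-(a₂ * v₀₂))
      simp only [abs_neg] at t1
      have e : a₁ * P * v₀₁ + a₂ * v₀₂ + -(a₂ * v₀₂) = a₁ * P * v₀₁ := by ring
      rw [e] at t1
      linarith
    have e1 : |a₁ * P * v₀₁| = |a₁ * P| * |v₀₁| := by rw [abs_mul]
    have e2 : |a₂ * v₀₂| = |a₂| * |v₀₂| := abs_mul _ _
    rw [e1, e2] at h1
    nlinarith [abs_nonneg v₀₁, abs_nonneg a₂]
  · rw [max_eq_right h]
    refine le_trans ?_ (le_max_right _ _)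
    have hu : |u₀| ≤ |v₀₂| := le_trans hv (by rw [max_eq_right h])
    have h1 : |b₂ * Q * v₀₂| - |b₁ * v₀₁| - |b₃ * u₀| ≤ |b₁ * v₀₁ + b₂ * Q * v₀₂ + b₃ * u₀| := by
      have t1 := abs_add_le (b₁ * v₀₁ + b₂ * Q * v₀₂ + b₃ * u₀) (-(b₁ * v₀₁) + -(b₃ * u₀))
      have e : b₁ * v₀₁ + b₂ * Q * v₀₂ + b₃ * u₀ + (-(b₁ * v₀₁) + -(b₃ * u₀)) = b₂ * Q * v₀₂ := by ring
      rw [e] at t1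
      have t2 := abs_add_le (-(b₁ * v₀₁)) (-(b₃ * u₀))
      simp only [abs_neg] at t2
      linarith
    have e1 : |b₂ * Q * v₀₂| = |b₂ * Q| * |v₀₂| := by rw [abs_mul]
    have e2 : |b₁ * v₀₁| = |b₁| * |v₀₁| := abs_mul _ _
    have e3 : |b₃ * u₀| = |b₃| * |u₀| := abs_mul _ _
    rw [e1, e2, e3] at h1
    nlinarith [abs_nonneg v₀₂, abs_nonneg b₁, abs_nonneg b₃, abs_nonneg u₀]
end

section
/- Let G = (D, E) be an invertible (n−d)×(n−d) real matrix and C an invertible d×d real matrix, with n ≥ 2d. Define F : ℝⁿ → ℝⁿ by F(x) = (Δ(x₁,...,x_d) + M x, G' x), where M = (A, B, C) is the d×n matrix acting on x, Δ_i(x) = a_{ii} − x_i², and the last n−d coordinates of F are given by the matrix (D, E, 0) applied to x. Then F is a bijection, and its inverse H satisfies: (h₁,...,h_{n−d})ᵀ = G⁻¹(x_{d+1},...,x_n)ᵀ and (h_{n−d+1},...,h_n)ᵀ = C⁻¹(x₁,...,x_d)ᵀ − C⁻¹L(h₁,...,h_d)ᵀ − C⁻¹(a₁₁−h₁², ...,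 a_{dd}−h_d²)ᵀ, where L = (A,B). In particular, the inverse of F is a polynomial map of degree at most 2. -/
open Finset Matrix

theorem stmt_15 (n d : ℕ) (hd : 1 ≤ d) (hn : 2 * d ≤ n)
    (a : Matrix (Fin n) (Fin n) ℝ)
    (hdiag : ∀ i : Fin n, d ≤ i.val → a i i = 0)
    (hzero : ∀ i j : Fin n, d ≤ i.val → n - d ≤ j.val → a i j = 0)
    (C : Matrix (Fin d) (Fin d) ℝ)
    (hC : ∀ k l : Fin d, C k l = a ⟨k.val, by omega⟩ ⟨n - d + l.val, by omega⟩)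
    (G : Matrix (Fin (n - d)) (Fin (n - d)) ℝ)
    (hG : ∀ k l : Fin (n - d), G k l = a ⟨d + k.val, by omega⟩ ⟨l.val, by omega⟩)
    (L : Matrix (Fin d) (Fin (n - d)) ℝ)
    (hL : ∀ (k : Fin d) (l : Fin (n - d)),
      L k l = if k.val = l.val then 0 else a ⟨k.val, by omega⟩ ⟨l.val, by omega⟩)
    (hCdet : IsUnit C.det) (hGdet : IsUnit G.det)
    (F : (Fin n → ℝ) → (Fin n → ℝ))
    (hF : F = fun x i =>
      if i.val < d then a i i - x i ^ 2 + ∑ j ∈ Finset.univ.erase i, a i j * x j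
      else ∑ j ∈ Finset.univ.erase i, a i j * x j) :
    Function.Bijective F ∧
    (∀ x y : Fin n → ℝ, F y = x →
      (∀ k : Fin (n - d),
        y ⟨k.val, by omega⟩ =
          Matrix.mulVec G⁻¹ (fun l : Fin (n - d) => x ⟨d + l.val, by omega⟩) k) ∧
      (∀ k : Fin d,
        y ⟨n - d + k.val, by omega⟩ =
          Matrix.mulVec C⁻¹ (fun i : Fin d => x ⟨i.val, by omega⟩) k
          - Matrix.mulVec (C⁻¹ * L) (fun l : Fin (n - d) => y ⟨l.val, by omega⟩) k
          - Matrix.mulVec C⁻¹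
              (fun i : Fin d =>
                a ⟨i.val, by omega⟩ ⟨i.val, by omega⟩ - (y ⟨i.val, by omega⟩) ^ 2) k)) ∧
    ∃ P : Fin n → MvPolynomial (Fin n) ℝ,
      (∀ i, (P i).totalDegree ≤ 2) ∧
      ∀ x y : Fin n → ℝ, F y = x → ∀ i, y i = MvPolynomial.eval x (P i) := by
  have hdn : d ≤ n - d := by omega
  have hnd : n - d + d = n := by omega
  -- splitting a sum over Fin n
  have split : ∀ g : Fin n → ℝ, ∑ j : Fin n, g j =
      (∑ l : Fin (n - d), g ⟨l.val, by omega⟩) + ∑ k : Fin d, g ⟨n - d + k.val, by omega⟩ := by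
    intro g
    rw [← Fintype.sum_equiv (finCongr hnd) (fun j => g (finCongr hnd j)) g (fun _ => rfl),
      Fin.sum_univ_add]
    rfl
  -- abbreviations
  set yfun : (Fin n → ℝ) → (Fin (n - d) → ℝ) := fun y l => y ⟨l.val, by omega⟩ with hyfun
  set ylast : (Fin n → ℝ) → (Fin d → ℝ) := fun y k => y ⟨n - d + k.val, by omega⟩ with hylast
  set xt : (Fin n → ℝ) → (Fin (n - d) → ℝ) := fun x l => x ⟨d + l.val, by omega⟩ with hxt
  set xh : (Fin n → ℝ) → (Fin d → ℝ) := fun x i => x ⟨i.val, by omega⟩ with hxh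
  set Δ : (Fin n → ℝ) → (Fin d → ℝ) :=
    fun y i => a ⟨i.val, by omega⟩ ⟨i.val, by omega⟩ - (y ⟨i.val, by omega⟩) ^ 2 with hΔ
  have keyG : ∀ (y : Fin n → ℝ) (k : Fin (n - d)),
      F y ⟨d + k.val, by omega⟩ = (G *ᵥ yfun y) k := by
    intro y k
    simp only [hF]
    rw [if_neg (show ¬ ((⟨d + k.val, by omega⟩ : Fin n).val < d) by simp),
      Finset.sum_erase_eq_sub (Finset.mem_univ _), split (fun j => a _ j * y j)]
    have h1 : ∀ kk : Fin d,
        a ⟨d + k.val, by omega⟩ ⟨n - d + kk.val, by omega⟩ = 0 := fun kk =>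
      hzero _ _ (by simp) (by simp)
    have h2 : a ⟨d + k.val, by omega⟩ ⟨d + k.val, by omega⟩ = 0 := hdiag _ (by simp)
    simp only [h1, h2, zero_mul, Finset.sum_const_zero, add_zero, sub_zero]
    simp only [Matrix.mulVec, dotProduct, hyfun]
    refine Finset.sum_congr rfl fun l _ => ?_
    rw [hG]
  have keyC : ∀ (y : Fin n → ℝ) (k : Fin d),
      F y ⟨k.val, by omega⟩ =
        a ⟨k.val, by omega⟩ ⟨k.val, by omega⟩ - (y ⟨k.val, by omega⟩) ^ 2
          + ((L *ᵥ yfun y) k + (C *ᵥ ylast y) k) := by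
    intro y k
    simp only [hF]
    rw [if_pos (show (⟨k.val, by omega⟩ : Fin n).val < d by simp),
      Finset.sum_erase_eq_sub (Finset.mem_univ _), split (fun j => a _ j * y j)]
    have h1 : ∀ l : Fin (n - d),
        a ⟨k.val, by omega⟩ ⟨l.val, by omega⟩ * y ⟨l.val, by omega⟩ =
          L k l * y ⟨l.val, by omega⟩ +
            (if l = (⟨k.val, by omega⟩ : Fin (n - d)) then
              a ⟨k.val, by omega⟩ ⟨k.val, by omega⟩ * y ⟨k.val, by omega⟩ else 0) := by
      intro l
      rw [hL]
      by_cases h : l = (⟨k.val, by omega⟩ : Fin (n - d))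
      · subst h
        simp
      · rw [if_neg h, if_neg (fun hh => h (Fin.ext hh.symm)), add_zero]
    calc a ⟨k.val, by omega⟩ ⟨k.val, by omega⟩ - y ⟨k.val, by omega⟩ ^ 2 +
          ((∑ l : Fin (n - d), a ⟨k.val, by omega⟩ ⟨l.val, by omega⟩ * y ⟨l.val, by omega⟩) +
            (∑ kk : Fin d, a ⟨k.val, by omega⟩ ⟨n - d + kk.val, by omega⟩ * y ⟨n - d + kk.val, by omega⟩)
          - a ⟨k.val, by omega⟩ ⟨k.val, by omega⟩ * y ⟨k.val, by omega⟩)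
        = a ⟨k.val, by omega⟩ ⟨k.val, by omega⟩ - y ⟨k.val, by omega⟩ ^ 2 +
          ((∑ l : Fin (n - d), L k l * y ⟨l.val, by omega⟩) +
            (∑ kk : Fin d, C k kk * y ⟨n - d + kk.val, by omega⟩)) := by
          simp only [h1, Finset.sum_add_distrib, Finset.sum_ite_eq' Finset.univ]
          simp only [Finset.mem_univ, if_true]
          have : ∀ kk : Fin d, C k kk * y ⟨n - d + kk.val, by omega⟩ =
              a ⟨k.val, by omega⟩ ⟨n - d + kk.val, by omega⟩ * y ⟨n - d + kk.val, by omega⟩ := by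
            intro kk; rw [hC]
          simp only [this]
          ring
      _ = _ := by
          simp only [Matrix.mulVec, dotProduct, hyfun, hylast]
  -- invertibility facts
  have hGG : ∀ v w : Fin (n - d) → ℝ, G *ᵥ v = w ↔ v = G⁻¹ *ᵥ w := by
    intro v w
    constructor
    · rintro rfl
      rw [Matrix.mulVec_mulVec, Matrix.nonsing_inv_mul G hGdet, Matrix.one_mulVec]
    · rintro rfl
      rw [Matrix.mulVec_mulVec, Matrix.mul_nonsing_inv G hGdet, Matrix.one_mulVec]
  have hCC : ∀ v w : Fin d → ℝ, C *ᵥ v = w ↔ v = C⁻¹ *ᵥ w := by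
    intro v w
    constructor
    · rintro rfl
      rw [Matrix.mulVec_mulVec, Matrix.nonsing_inv_mul C hCdet, Matrix.one_mulVec]
    · rintro rfl
      rw [Matrix.mulVec_mulVec, Matrix.mul_nonsing_inv C hCdet, Matrix.one_mulVec]
  have forall_split : ∀ P : Fin n → Prop, (∀ i, P i) ↔
      ((∀ k : Fin d, P ⟨k.val, by omega⟩) ∧ ∀ k : Fin (n - d), P ⟨d + k.val, by omega⟩) := by
    intro P
    constructor
    · exact fun h => ⟨fun k => h _, fun k => h _⟩
    · rintro ⟨h1, h2⟩ i
      by_cases hi : i.val < d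
      · exact h1 ⟨i.val, hi⟩
      · have hi' : i = ⟨d + (i.val - d), by omega⟩ := by
          apply Fin.ext; simp; omega
        rw [hi']
        exact h2 ⟨i.val - d, by omega⟩
  -- the characterization of F y = x
  have charac : ∀ x y : Fin n → ℝ, F y = x ↔
      (G *ᵥ yfun y = xt x ∧ C *ᵥ ylast y = xh x - L *ᵥ yfun y - Δ y) := by
    intro x y
    rw [funext_iff, forall_split (fun i => F y i = x i)]
    constructor
    · rintro ⟨h1, h2⟩
      constructor
      · funext k
        rw [← keyG y k, h2 k]
      · funext k
        have := h1 k
        rw [keyC y k] at this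
        simp only [Pi.sub_apply, hxh, hΔ]
        have h3 : x ⟨k.val, by omega⟩ = xh x k := rfl
        linarith [this]
    · rintro ⟨h1, h2⟩
      constructor
      · intro k
        rw [keyC y k]
        have e1 := congrFun h2 k
        simp only [Pi.sub_apply, hxh, hΔ] at e1
        linarith [e1]
      · intro k
        rw [keyG y k, h1]
  -- injectivity
  have hinj : Function.Injective F := by
    intro y y' hyy
    have c1 := (charac (F y') y).mp hyy
    have c2 := (charac (F y') y').mp rfl
    have hf : yfun y = yfun y' := by
      rw [(hGG _ _).mp c1.1, (hGG _ _).mp c2.1]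
    have hΔeq : Δ y = Δ y' := by
      funext i
      have := congrFun hf ⟨i.val, by omega⟩
      simp only [hΔ, hyfun] at this ⊢
      rw [this]
    have hl : ylast y = ylast y' := by
      have hcc : C *ᵥ ylast y = C *ᵥ ylast y' := by rw [c1.2, c2.2, hf, hΔeq]
      have h5 := (hCC _ _).mp hcc
      rwa [Matrix.mulVec_mulVec, Matrix.nonsing_inv_mul C hCdet, Matrix.one_mulVec] at h5
    funext i
    by_cases hi : i.val < n - d
    · exact congrFun hf ⟨i.val, hi⟩
    · have hi' : i = ⟨n - d + (i.val - (n - d)), by omega⟩ := by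
        apply Fin.ext; simp; omega
      rw [hi']
      exact congrFun hl ⟨i.val - (n - d), by omega⟩
  -- surjectivity
  have hsurj : Function.Surjective F := by
    intro x
    set yf0 : Fin (n - d) → ℝ := G⁻¹ *ᵥ xt x with hyf0
    set Δ0 : Fin d → ℝ := fun i =>
      a ⟨i.val, by omega⟩ ⟨i.val, by omega⟩ - (yf0 ⟨i.val, by omega⟩) ^ 2 with hΔ0
    set yl0 : Fin d → ℝ := C⁻¹ *ᵥ (xh x - L *ᵥ yf0 - Δ0) with hyl0
    refine ⟨fun i => if h : i.val < n - d then yf0 ⟨i.val, h⟩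
      else yl0 ⟨i.val - (n - d), by omega⟩, ?_⟩
    set y : Fin n → ℝ := fun i => if h : i.val < n - d then yf0 ⟨i.val, h⟩
      else yl0 ⟨i.val - (n - d), by omega⟩ with hy
    have hyf : yfun y = yf0 := by
      funext l
      simp only [hyfun, hy]
      rw [dif_pos (show (⟨l.val, by omega⟩ : Fin n).val < n - d by simp)]
    have hyl : ylast y = yl0 := by
      funext k
      simp only [hylast, hy]
      rw [dif_neg (show ¬ ((⟨n - d + k.val, by omega⟩ : Fin n).val < n - d) by simp)]
      congr 1
      apply Fin.ext
      simp
    have hΔy : Δ y = Δ0 := by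
      funext i
      simp only [hΔ, hΔ0]
      have : y ⟨i.val, by omega⟩ = yf0 ⟨i.val, by omega⟩ :=
        congrFun hyf ⟨i.val, by omega⟩
      rw [this]
    rw [charac]
    refine ⟨?_, ?_⟩
    · rw [hyf, (hGG _ _)]
    · rw [hyl, hyl0, hΔy, hyf]
      exact (hCC _ _).mpr rfl
  -- the explicit formulas
  have formulas : ∀ x y : Fin n → ℝ, F y = x →
      (yfun y = G⁻¹ *ᵥ xt x) ∧
      (ylast y = C⁻¹ *ᵥ xh x - (C⁻¹ * L) *ᵥ yfun y - C⁻¹ *ᵥ Δ y) := by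
    intro x y hxy
    obtain ⟨c1, c2⟩ := (charac x y).mp hxy
    refine ⟨(hGG _ _).mp c1, ?_⟩
    rw [(hCC _ _).mp c2, Matrix.mulVec_sub, Matrix.mulVec_sub, ← Matrix.mulVec_mulVec]
  refine ⟨⟨hinj, hsurj⟩, ?_, ?_⟩
  · intro x y hxy
    obtain ⟨f1, f2⟩ := formulas x y hxy
    exact ⟨fun k => congrFun f1 k, fun k => congrFun f2 k⟩
  -- polynomial inverse
  · set Pf : Fin (n - d) → MvPolynomial (Fin n) ℝ := fun l =>
      ∑ m : Fin (n - d), MvPolynomial.C (G⁻¹ l m) * MvPolynomial.X ⟨d + m.val, by omega⟩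
      with hPf
    set PΔ : Fin d → MvPolynomial (Fin n) ℝ := fun i =>
      MvPolynomial.C (a ⟨i.val, by omega⟩ ⟨i.val, by omega⟩) - (Pf ⟨i.val, by omega⟩) ^ 2
      with hPΔ
    set Pl : Fin d → MvPolynomial (Fin n) ℝ := fun k =>
      (∑ i : Fin d, MvPolynomial.C (C⁻¹ k i) * MvPolynomial.X ⟨i.val, by omega⟩)
      - (∑ l : Fin (n - d), MvPolynomial.C ((C⁻¹ * L) k l) * Pf l)
      - ∑ i : Fin d, MvPolynomial.C (C⁻¹ k i) * PΔ i with hPl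
    have degPf : ∀ l, (Pf l).totalDegree ≤ 1 := by
      intro l
      refine (MvPolynomial.totalDegree_finset_sum _ _).trans (Finset.sup_le fun m _ => ?_)
      refine (MvPolynomial.totalDegree_mul _ _).trans ?_
      simp [MvPolynomial.totalDegree_C, MvPolynomial.totalDegree_X]
    have degPΔ : ∀ i, (PΔ i).totalDegree ≤ 2 := by
      intro i
      refine (MvPolynomial.totalDegree_sub _ _).trans (max_le ?_ ?_)
      · simp [MvPolynomial.totalDegree_C]
      · refine (MvPolynomial.totalDegree_pow _ _).trans ?_
        have := degPf ⟨i.val, by omega⟩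
        omega
    have evalPf : ∀ (x : Fin n → ℝ) (l : Fin (n - d)),
        MvPolynomial.eval x (Pf l) = (G⁻¹ *ᵥ xt x) l := by
      intro x l
      simp only [hPf, map_sum, MvPolynomial.eval_mul, MvPolynomial.eval_C, MvPolynomial.eval_X]
      simp only [Matrix.mulVec, dotProduct, hxt]
    refine ⟨fun i => if h : i.val < n - d then Pf ⟨i.val, h⟩
      else Pl ⟨i.val - (n - d), by omega⟩, ?_, ?_⟩
    · intro i
      by_cases h : i.val < n - d
      · simp only [dif_pos h]
        exact (degPf _).trans (by omega)
      · simp only [dif_neg h]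
        refine (MvPolynomial.totalDegree_sub _ _).trans (max_le ((MvPolynomial.totalDegree_sub _ _).trans (max_le ?_ ?_)) ?_)
        · refine (MvPolynomial.totalDegree_finset_sum _ _).trans (Finset.sup_le fun m _ => ?_)
          refine (MvPolynomial.totalDegree_mul _ _).trans ?_
          simp [MvPolynomial.totalDegree_C, MvPolynomial.totalDegree_X]
        · refine (MvPolynomial.totalDegree_finset_sum _ _).trans (Finset.sup_le fun m _ => ?_)
          refine (MvPolynomial.totalDegree_mul _ _).trans ?_
          have := degPf m
          simp only [MvPolynomial.totalDegree_C]
          omega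
        · refine (MvPolynomial.totalDegree_finset_sum _ _).trans (Finset.sup_le fun m _ => ?_)
          refine (MvPolynomial.totalDegree_mul _ _).trans ?_
          have := degPΔ m
          simp only [MvPolynomial.totalDegree_C]
          omega
    · intro x y hxy i
      obtain ⟨f1, f2⟩ := formulas x y hxy
      have hyfPf : ∀ l : Fin (n - d), y ⟨l.val, by omega⟩ = MvPolynomial.eval x (Pf l) := by
        intro l
        rw [evalPf]
        exact congrFun f1 l
      by_cases h : i.val < n - d
      · simp only [dif_pos h]
        exact hyfPf ⟨i.val, h⟩
      · simp only [dif_neg h]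
        have hi' : y i = y ⟨n - d + (i.val - (n - d)), by omega⟩ := by
          congr 1
          apply Fin.ext; simp; omega
        have hk := congrFun f2 (⟨i.val - (n - d), by omega⟩ : Fin d)
        simp only [Pi.sub_apply, hylast] at hk
        rw [hi', hk]
        simp only [hPl, map_sum, MvPolynomial.eval_sub, MvPolynomial.eval_mul,
          MvPolynomial.eval_C, MvPolynomial.eval_X, MvPolynomial.eval_pow]
        congr 1
        · congr 1
          simp only [Matrix.mulVec, dotProduct, hyfun]
          refine Finset.sum_congr rfl fun l _ => ?_
          rw [hyfPf l]
        · simp only [Matrix.mulVec, dotProduct, hΔ, hPΔ]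
          refine Finset.sum_congr rfl fun m _ => ?_
          rw [hyfPf ⟨m.val, by omega⟩]
          simp [MvPolynomial.eval_sub, MvPolynomial.eval_pow]
end

section
/- Let F : ℝⁿ → ℝⁿ with f_i(x) = a_{ii} − x_i² + Σ_{j≠i} a_{ij}x_j for 1 ≤ i ≤ d and linear in the remaining coordinates, let R = min_{1≤i≤d} √(a_{ii}) with all a_{ii} > 0, and U = [−R,R]ⁿ. If x ∈ U and F(x) ∈ U, then for each 1 ≤ i ≤ d: a_{ii} − R − R·Σ_{j≠i}|a_{ij}| ≤ x_i² ≤ a_{ii} + R + R·Σ_{j≠i}|a_{ij}|. In particular, if a_{ii} > 2(R + R·Σ_{j≠i}|a_{ij}|) then x_i² ≥ a_{ii}/2 > 0, so x_i is bounded away from 0. -/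
open Finset

theorem stmt_19 (n d : ℕ) (hd : 1 ≤ d) (hdn : d ≤ n)
    (a : Matrix (Fin n) (Fin n) ℝ)
    (hpos : ∀ i : Fin n, i.val < d → 0 < a i i)
    (R : ℝ)
    (hRlb : ∀ i : Fin n, i.val < d → R ≤ Real.sqrt (a i i))
    (hRmem : ∃ i : Fin n, i.val < d ∧ R = Real.sqrt (a i i))
    (F : (Fin n → ℝ) → (Fin n → ℝ))
    (hF : F = fun x i =>
      if i.val < d then a i i - x i ^ 2 + ∑ j ∈ Finset.univ.erase i, a i j * x j
      else ∑ j ∈ Finset.univ.erase i, a i j * x j) :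
    ∀ x : Fin n → ℝ, (∀ j, |x j| ≤ R) → (∀ j, |F x j| ≤ R) →
      ∀ i : Fin n, i.val < d →
        (a i i - R - R * ∑ j ∈ Finset.univ.erase i, |a i j| ≤ (x i) ^ 2 ∧
          (x i) ^ 2 ≤ a i i + R + R * ∑ j ∈ Finset.univ.erase i, |a i j|) ∧
        (2 * (R + R * ∑ j ∈ Finset.univ.erase i, |a i j|) < a i i →
          a i i / 2 ≤ (x i) ^ 2) := by
  intro x hx hFx i hi
  obtain ⟨i0, hi0, hR0⟩ := hRmem
  have hRnn : 0 ≤ R := hR0 ▸ Real.sqrt_nonneg _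
  have hFxi := hFx i
  rw [hF] at hFxi
  simp only [hi, if_true] at hFxi
  set S := ∑ j ∈ Finset.univ.erase i, a i j * x j with hS
  have hSbd : |S| ≤ R * ∑ j ∈ Finset.univ.erase i, |a i j| := by
    calc |S| ≤ ∑ j ∈ Finset.univ.erase i, |a i j * x j| :=
          Finset.abs_sum_le_sum_abs _ _
      _ ≤ ∑ j ∈ Finset.univ.erase i, |a i j| * R := by
          apply Finset.sum_le_sum
          intro j _
          rw [abs_mul]
          exact mul_le_mul_of_nonneg_left (hx j) (abs_nonneg _)
      _ = R * ∑ j ∈ Finset.univ.erase i, |a i j| := by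
          rw [Finset.mul_sum]; simp [mul_comm]
  rw [abs_le] at hFxi hSbd
  have key : (a i i - R - R * ∑ j ∈ Finset.univ.erase i, |a i j| ≤ (x i) ^ 2 ∧
      (x i) ^ 2 ≤ a i i + R + R * ∑ j ∈ Finset.univ.erase i, |a i j|) := by
    constructor <;> nlinarith [hFxi.1, hFxi.2, hSbd.1, hSbd.2]
  exact ⟨key, fun h => by nlinarith [key.1]⟩
end
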